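/- Let p ∈ ℂ[s] be a polynomial of degree N_p with leading coefficient p_{N_p} ≠ 0, and let N_q ∈ ℕ be such that p and s^{N_q} are coprime (i.e. N_q = 0 or p(0) ≠ 0) and N_p = N_q + 2. Then there exists exactly one nonzero f ∈ ℂ((x)) of negative order satisfying f^{N_q}·(df/dx) = p(f); moreover this f has order exactly −1 and its leading coefficient equals −1/p_{N_p}. -/

import Mathlib

/-- Formal derivative of a Laurent series. -/
noncomputable def lsDeriv {A : Type*} [Ring A] (f : LaurentSeries A) : LaurentSeries A where
  coeff k := (k + 1) • f.coeff (k + 1)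
  isPWO_support' := by
    refine (f.isPWO_support.image_of_monotone
      (f := fun m : ℤ => m - 1) (fun a b h => by simpa using h)).mono ?_
    intro k hk
    have hk' : f.coeff (k + 1) ≠ 0 := by
      intro h
      simp [Function.mem_support, h] at hk
    exact ⟨k + 1, hk', by ring⟩

/-!
A solution `f` of negative order `m` and leading coefficient `c` has order exactly `-1`: the left
side `f ^ N * f'` has order `(N + 1) * m - 1`, while the top term of `p(f)` contributes
`p_{N+2} c ^ (N + 2) x ^ ((N + 2) * m)` and everything else has higher order, so
`(N + 1) * m - 1 ≤ (N + 2) * m`. Comparing these coefficients then gives `c = -1 / p_{N+2}`.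

Writing `f = x⁻¹ F` turns the equation into a power-series equation for `F` whose `n`-th
coefficient (`n ≥ 1`) is `(n + 1) c ^ N F_n` plus a polynomial in `F_0, …, F_{n-1}`; hence `F` is
determined recursively from `F_0 = c`, which gives both existence and uniqueness.
-/

open PowerSeries

section SquareZero

variable {S : Type*} [CommRing S] {x v c y : S}

theorem add_pow_mul_of_mul_eq_zero (hvy : v * y = 0) (m : ℕ) : (x + v) ^ m * y = x ^ m * y := by
  obtain ⟨w, hw⟩ := sub_dvd_pow_sub_pow (x + v) x m
  rw [add_sub_cancel_left] at hw
  linear_combination y * hw + w * hvy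

theorem add_pow_succ_of_mul_self_eq_zero (hv : v * v = 0) (hvx : v * x = c * v) (m : ℕ) :
    (x + v) ^ (m + 1) = x ^ (m + 1) + (m + 1) * c ^ m * v := by
  have h := sq_dvd_add_pow_sub_sub v x (m + 1)
  rw [sq, hv, zero_dvd_iff, Nat.add_sub_cancel, mul_comm (x ^ m),
    (SemiconjBy.pow_right hvx m).eq] at h
  push_cast at h
  linear_combination h

end SquareZero

namespace PowerSeries

theorem coeff_add_C_mul_X_pow {R : Type*} [Semiring R] (F : R⟦X⟧) (b : R) (m k : ℕ) :
    coeff k (F + C b * X ^ m) = coeff k F + if k = m then b else 0 := by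
  rw [map_add, coeff_C_mul_X_pow]

section Triangular

variable {K : Type*} [Field K]

/-- A map with these properties has exactly one zero with constant coefficient `a`, found by
solving for one coefficient at a time (`triangularApprox`). -/
structure IsTriangular (Φ : K⟦X⟧ → K⟦X⟧) (a : K) (κ : ℕ → K) : Prop where
  coeff_congr : ∀ n F G, (∀ k ≤ n, coeff k F = coeff k G) → coeff n (Φ F) = coeff n (Φ G)
  coeff_perturb : ∀ F, constantCoeff F = a → ∀ n b,
    coeff (n + 1) (Φ (F + C b * X ^ (n + 1))) = coeff (n + 1) (Φ F) + κ n * b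
  slope_ne_zero : ∀ n, κ n ≠ 0

noncomputable def triangularApprox (Φ : K⟦X⟧ → K⟦X⟧) (a : K) (κ : ℕ → K) : ℕ → K⟦X⟧
  | 0 => C a
  | n + 1 => triangularApprox Φ a κ n +
      C (-coeff (n + 1) (Φ (triangularApprox Φ a κ n)) / κ n) * X ^ (n + 1)

variable {Φ : K⟦X⟧ → K⟦X⟧} {a : K} {κ : ℕ → K}

theorem coeff_triangularApprox_succ {n k : ℕ} (hk : k ≤ n) :
    coeff k (triangularApprox Φ a κ (n + 1)) = coeff k (triangularApprox Φ a κ n) := by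
  rw [triangularApprox, coeff_add_C_mul_X_pow, if_neg (by omega), add_zero]

theorem coeff_triangularApprox_of_le {n k : ℕ} (hk : k ≤ n) :
    coeff k (triangularApprox Φ a κ n) = coeff k (triangularApprox Φ a κ k) := by
  induction n, hk using Nat.le_induction with
  | base => rfl
  | succ n hkn ih => rw [coeff_triangularApprox_succ hkn, ih]

theorem constantCoeff_triangularApprox (n : ℕ) :
    constantCoeff (triangularApprox Φ a κ n) = a := by
  rw [← coeff_zero_eq_constantCoeff_apply, coeff_triangularApprox_of_le (Nat.zero_le n),
    triangularApprox, coeff_zero_C]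

theorem IsTriangular.coeff_map_triangularApprox (hΦ : IsTriangular Φ a κ)
    (h0 : constantCoeff (Φ (C a)) = 0) {n k : ℕ} (hk : k ≤ n) :
    coeff k (Φ (triangularApprox Φ a κ n)) = 0 := by
  induction n generalizing k with
  | zero =>
    rw [Nat.le_zero.mp hk, coeff_zero_eq_constantCoeff_apply]
    exact h0
  | succ n ih =>
    rcases hk.lt_or_eq with hk | rfl
    · rw [hΦ.coeff_congr k _ _ fun i hi => coeff_triangularApprox_succ (by omega)]
      exact ih (Nat.lt_succ_iff.mp hk)
    · rw [triangularApprox, hΦ.coeff_perturb _ (constantCoeff_triangularApprox n),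
        mul_div_cancel₀ _ (hΦ.slope_ne_zero n), add_neg_cancel]

theorem IsTriangular.exists_map_eq_zero (hΦ : IsTriangular Φ a κ)
    (h0 : constantCoeff (Φ (C a)) = 0) : ∃ F, constantCoeff F = a ∧ Φ F = 0 := by
  set F := PowerSeries.mk fun n => coeff n (triangularApprox Φ a κ n)
  have hF : ∀ n, ∀ k ≤ n, coeff k F = coeff k (triangularApprox Φ a κ n) := fun n k hk => by
    rw [coeff_mk, coeff_triangularApprox_of_le hk]
  refine ⟨F, ?_, ?_⟩
  · rw [← coeff_zero_eq_constantCoeff_apply, hF 0 0 le_rfl, coeff_zero_eq_constantCoeff_apply,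
      constantCoeff_triangularApprox]
  · ext n
    rw [hΦ.coeff_congr n _ _ (hF n), hΦ.coeff_map_triangularApprox h0 le_rfl, map_zero]

theorem IsTriangular.eq_of_map_eq_zero (hΦ : IsTriangular Φ a κ) {F G : K⟦X⟧}
    (hF₀ : constantCoeff F = a) (hG₀ : constantCoeff G = a) (hF : Φ F = 0) (hG : Φ G = 0) :
    F = G := by
  ext n
  induction n using Nat.strong_induction_on with
  | _ n ih =>
    cases n with
    | zero => rw [coeff_zero_eq_constantCoeff_apply, coeff_zero_eq_constantCoeff_apply, hF₀, hG₀]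
    | succ n =>
      set b := coeff (n + 1) G - coeff (n + 1) F
      have hGF : ∀ k ≤ n + 1, coeff k G = coeff k (F + C b * X ^ (n + 1)) := fun k hk => by
        rw [coeff_add_C_mul_X_pow]
        rcases hk.lt_or_eq with hk | rfl
        · rw [if_neg hk.ne, add_zero, ih k hk]
        · rw [if_pos rfl, add_sub_cancel]
      have hb : κ n * b = 0 := by
        simpa [hF, hG] using (hΦ.coeff_congr _ _ _ hGF).trans (hΦ.coeff_perturb F hF₀ n b)
      exact (sub_eq_zero.mp ((mul_eq_zero.mp hb).resolve_left (hΦ.slope_ne_zero n))).symm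

end Triangular

section Residual

variable {R : Type*} [CommRing R]

theorem coeff_X_mul_derivative (F : R⟦X⟧) (n : ℕ) : coeff n (X * d⁄dX R F) = n * coeff n F := by
  cases n with
  | zero => simp
  | succ n => rw [coeff_succ_X_mul, coeff_derivative, mul_comm]; push_cast; ring

theorem X_mul_derivative_C_mul_X_pow (b : R) (n : ℕ) :
    X * d⁄dX R (C b * X ^ n) = (n : R⟦X⟧) * (C b * X ^ n) := by
  ext k
  rw [coeff_X_mul_derivative, ← map_natCast C, ← mul_assoc, ← map_mul, coeff_C_mul_X_pow,
    coeff_C_mul_X_pow]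
  split_ifs with h <;> simp [h]

theorem mk_span_X_pow_eq_iff {F G : R⟦X⟧} {n : ℕ} :
    Ideal.Quotient.mk (Ideal.span {X ^ (n + 1)}) F = Ideal.Quotient.mk _ G ↔
      ∀ k ≤ n, coeff k F = coeff k G := by
  simp only [Ideal.Quotient.eq, Ideal.mem_span_singleton, X_pow_dvd_iff, map_sub, sub_eq_zero,
    Nat.lt_succ_iff]

theorem mk_C_mul_X_pow_mul (b : R) (n : ℕ) (H : R⟦X⟧) :
    Ideal.Quotient.mk (Ideal.span {X ^ (n + 2)}) (C b * X ^ (n + 1)) * Ideal.Quotient.mk _ H =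
      Ideal.Quotient.mk _ (C (constantCoeff H)) * Ideal.Quotient.mk _ (C b * X ^ (n + 1)) := by
  obtain ⟨w, hw⟩ := X_dvd_iff.mpr (by simp : constantCoeff (H - C (constantCoeff H)) = 0)
  rw [← map_mul, ← map_mul, Ideal.Quotient.eq, Ideal.mem_span_singleton]
  exact ⟨C b * w, by linear_combination (C b * X ^ (n + 1)) * hw⟩

/-- For `f = x⁻¹ F`, `x ^ (N + 2) * (f ^ N * f' - p(f))` is the image of `odeResidual p N F`
when `p.natDegree ≤ N + 2`; `X * d⁄dX R` is the Euler operator `x d/dx`. -/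
noncomputable def odeResidual (p : Polynomial R) (N : ℕ) (F : R⟦X⟧) : R⟦X⟧ :=
  F ^ N * (X * d⁄dX R F) - F ^ (N + 1) -
    ∑ j ∈ Finset.range (N + 3), C (p.coeff j) * F ^ j * X ^ (N + 2 - j)

theorem coeff_odeResidual_congr (p : Polynomial R) (N : ℕ) {n : ℕ} {F G : R⟦X⟧}
    (h : ∀ k ≤ n, coeff k F = coeff k G) :
    coeff n (odeResidual p N F) = coeff n (odeResidual p N G) := by
  have hθ : ∀ k ≤ n, coeff k (X * d⁄dX R F) = coeff k (X * d⁄dX R G) := fun k hk => by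
    rw [coeff_X_mul_derivative, coeff_X_mul_derivative, h k hk]
  rw [← mk_span_X_pow_eq_iff] at h hθ
  refine mk_span_X_pow_eq_iff.mp ?_ n le_rfl
  simp only [odeResidual, map_sub, map_mul, map_pow, map_sum, h, hθ]

theorem constantCoeff_odeResidual (p : Polynomial R) (N : ℕ) {F : R⟦X⟧} {a : R}
    (hF : constantCoeff F = a) :
    constantCoeff (odeResidual p N F) = -a ^ (N + 1) - p.coeff (N + 2) * a ^ (N + 2) := by
  have hsum : ∑ j ∈ Finset.range (N + 2),
      constantCoeff (C (p.coeff j) * F ^ j * X ^ (N + 2 - j)) = 0 :=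
    Finset.sum_eq_zero fun j hj => by
      rw [map_mul, map_pow, constantCoeff_X, zero_pow (by simp at hj; omega), mul_zero]
  rw [odeResidual, map_sub, map_sub, map_sum, Finset.sum_range_succ, hsum]
  simp [hF]

theorem mk_odeResidual_add_C_mul_X_pow (p : Polynomial R) (N : ℕ) {F : R⟦X⟧} {a : R}
    (hF : constantCoeff F = a) (n : ℕ) (b : R) :
    Ideal.Quotient.mk (Ideal.span {X ^ (n + 2)}) (odeResidual p N (F + C b * X ^ (n + 1))) =
      Ideal.Quotient.mk _ (odeResidual p N F + C ((n - N) * a ^ N -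
        (N + 2) * p.coeff (N + 2) * a ^ (N + 1)) * (C b * X ^ (n + 1))) := by
  -- Modulo `X ^ (n + 2)`, `u` squares to zero and `u * H = H(0) * u`, so the residual is affine
  -- in `u`.
  set u := C b * X ^ (n + 1)
  set π := Ideal.Quotient.mk (Ideal.span {(X : R⟦X⟧) ^ (n + 2)})
  have hu₀ : constantCoeff u = 0 := by simp [u]
  have hkill : ∀ H, constantCoeff H = 0 → π u * π H = 0 := fun H hH => by
    rw [mk_C_mul_X_pow_mul, hH, map_zero, map_zero, zero_mul]
  have hux : π u * π F = π (C a) * π u := by rw [mk_C_mul_X_pow_mul, hF]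
  set θ := X * d⁄dX R F with hθ
  have hθu : X * d⁄dX R (F + u) = θ + ((n + 1 : ℕ) : R⟦X⟧) * u := by
    rw [map_add, mul_add, X_mul_derivative_C_mul_X_pow]
  have hlow : ∀ j ∈ Finset.range (N + 2), π (C (p.coeff j) * (F + u) ^ j * X ^ (N + 2 - j)) =
      π (C (p.coeff j) * F ^ j * X ^ (N + 2 - j)) := fun j hj => by
    have hj : N + 2 - j ≠ 0 := by rw [Finset.mem_range] at hj; omega
    simp only [map_mul, map_pow, map_add, mul_assoc]
    rw [← map_pow π X, add_pow_mul_of_mul_eq_zero (hkill _ (by simp [hj]))]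
  have hsplit : ∀ G, odeResidual p N G = G ^ N * (X * d⁄dX R G) - G ^ (N + 1) -
      ∑ j ∈ Finset.range (N + 2), C (p.coeff j) * G ^ j * X ^ (N + 2 - j) -
      C (p.coeff (N + 2)) * G ^ (N + 2) := fun G => by
    rw [odeResidual, Finset.sum_range_succ, Nat.sub_self, pow_zero, mul_one, sub_add_eq_sub_sub]
  rw [hsplit, hsplit, hθu, ← hθ]
  simp only [map_sub, map_sum, map_add]
  rw [Finset.sum_congr rfl hlow]
  simp only [map_sub, map_add, map_mul, map_pow, map_natCast, map_ofNat]
  have h1 := add_pow_mul_of_mul_eq_zero (x := π F) (hkill θ (by simp [hθ])) N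
  have h2 := add_pow_mul_of_mul_eq_zero (x := π F) (hkill u hu₀) N
  have h3 := (SemiconjBy.pow_right hux N).eq
  have h4 := add_pow_succ_of_mul_self_eq_zero (hkill u hu₀) hux N
  have h5 := add_pow_succ_of_mul_self_eq_zero (hkill u hu₀) hux (N + 1)
  push_cast at h5 ⊢
  linear_combination h1 + (↑n + 1) * (h2 + h3) - h4 - π (C (p.coeff (N + 2))) * h5

theorem coeff_odeResidual_add_C_mul_X_pow (p : Polynomial R) (N : ℕ) {F : R⟦X⟧} {a : R}
    (hF : constantCoeff F = a) (n : ℕ) (b : R) :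
    coeff (n + 1) (odeResidual p N (F + C b * X ^ (n + 1))) = coeff (n + 1) (odeResidual p N F) +
      ((n - N) * a ^ N - (N + 2) * p.coeff (N + 2) * a ^ (N + 1)) * b := by
  rw [mk_span_X_pow_eq_iff.mp (mk_odeResidual_add_C_mul_X_pow p N hF n b) (n + 1) le_rfl, map_add,
    ← mul_assoc, ← map_mul, coeff_C_mul_X_pow, if_pos rfl]

end Residual

theorem existsUnique_odeResidual_eq_zero {K : Type*} [Field K] [CharZero K]
    {p : Polynomial K} {N : ℕ} (hdeg : p.natDegree = N + 2) :
    ∃! F : K⟦X⟧, constantCoeff F = -p.leadingCoeff⁻¹ ∧ odeResidual p N F = 0 := by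
  have hp : p.leadingCoeff ≠ 0 :=
    Polynomial.leadingCoeff_ne_zero.mpr (Polynomial.ne_zero_of_natDegree_gt (n := 0) (by omega))
  have ha : p.coeff (N + 2) * -p.leadingCoeff⁻¹ = -1 := by
    rw [← hdeg, Polynomial.coeff_natDegree, mul_neg, mul_inv_cancel₀ hp]
  have hΦ : IsTriangular (odeResidual p N) (-p.leadingCoeff⁻¹)
      fun n => (n + 2) * (-p.leadingCoeff⁻¹) ^ N := by
    refine ⟨fun n F G h => coeff_odeResidual_congr p N h, fun F hF n b => ?_, fun n => ?_⟩
    · rw [coeff_odeResidual_add_C_mul_X_pow p N hF]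
      linear_combination (-(N + 2) * (-p.leadingCoeff⁻¹) ^ N * b) * ha
    · exact mul_ne_zero (by exact_mod_cast (by omega : n + 2 ≠ 0))
        (pow_ne_zero _ (neg_ne_zero.mpr (inv_ne_zero hp)))
  obtain ⟨F, hF⟩ := hΦ.exists_map_eq_zero <| by
    rw [constantCoeff_odeResidual p N (constantCoeff_C _)]
    linear_combination (-(-p.leadingCoeff⁻¹) ^ (N + 1)) * ha
  exact ⟨F, hF, fun G hG => hΦ.eq_of_map_eq_zero hG.1 hF.1 hG.2 hF.2⟩

end PowerSeries

section Laurent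

variable {R : Type*} [CommRing R]

theorem coeff_single_one_mul_lsDeriv (g : LaurentSeries R) (k : ℤ) :
    (HahnSeries.single 1 1 * lsDeriv g).coeff k = k • g.coeff k := by
  rw [HahnSeries.coeff_single_mul, one_mul]
  change (k - 1 + 1) • g.coeff (k - 1 + 1) = _
  rw [sub_add_cancel]

theorem coeff_lsDeriv_order_sub_one (f : LaurentSeries R) :
    (lsDeriv f).coeff (f.order - 1) = f.order * f.leadingCoeff := by
  change (f.order - 1 + 1) • f.coeff (f.order - 1 + 1) = _
  rw [sub_add_cancel, zsmul_eq_mul, HahnSeries.leadingCoeff_eq]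

theorem single_one_mul_lsDeriv_single_mul (m : ℤ) (g : LaurentSeries R) :
    HahnSeries.single 1 1 * lsDeriv (HahnSeries.single m 1 * g) =
      HahnSeries.single m 1 * (HahnSeries.single 1 1 * lsDeriv g + m • g) := by
  ext k
  rw [coeff_single_one_mul_lsDeriv, HahnSeries.coeff_single_mul, HahnSeries.coeff_single_mul,
    one_mul, one_mul, HahnSeries.coeff_add, coeff_single_one_mul_lsDeriv, HahnSeries.coeff_smul,
    ← add_smul, sub_add_cancel]

theorem ofPowerSeries_X_mul_derivative (F : R⟦X⟧) :
    HahnSeries.ofPowerSeries ℤ R (X * d⁄dX R F) =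
      HahnSeries.single 1 1 * lsDeriv (HahnSeries.ofPowerSeries ℤ R F) := by
  ext k
  rw [coeff_single_one_mul_lsDeriv, PowerSeries.coeff_coe, PowerSeries.coeff_coe]
  split_ifs with hk
  · rw [smul_zero]
  · rw [coeff_X_mul_derivative, zsmul_eq_mul, ← Int.cast_natCast,
      Int.natAbs_of_nonneg (not_lt.mp hk)]

theorem single_one_mul_single_neg_one_mul (g : LaurentSeries R) :
    HahnSeries.single 1 1 * (HahnSeries.single (-1) 1 * g) = g := by
  rw [← mul_assoc, HahnSeries.single_mul_single, add_neg_cancel, mul_one]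
  exact one_mul g

theorem coeff_single_neg_one_mul_ofPowerSeries (F : R⟦X⟧) :
    (HahnSeries.single (-1) 1 * HahnSeries.ofPowerSeries ℤ R F).coeff (-1) = constantCoeff F := by
  rw [HahnSeries.coeff_single_mul, sub_self, one_mul, PowerSeries.coeff_coe, if_neg (lt_irrefl 0),
    Int.natAbs_zero, coeff_zero_eq_constantCoeff_apply]

theorem lsDeriv_eq_aeval_iff_odeResidual_eq_zero {p : Polynomial R} {N : ℕ}
    (hp : p.natDegree ≤ N + 2) {f : LaurentSeries R} {F : R⟦X⟧}
    (hf : HahnSeries.single 1 1 * f = HahnSeries.ofPowerSeries ℤ R F) :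
    f ^ N * lsDeriv f = Polynomial.aeval f p ↔ odeResidual p N F = 0 := by
  set t : LaurentSeries R := HahnSeries.single 1 1
  set φ := HahnSeries.ofPowerSeries ℤ R
  have hst : HahnSeries.single (-1) 1 * t = 1 := by
    rw [HahnSeries.single_mul_single, neg_add_cancel, mul_one]; rfl
  have ht : IsUnit t := IsUnit.of_mul_eq_one _ ((mul_comm _ _).trans hst)
  have hf' : f = HahnSeries.single (-1) 1 * φ F := by rw [← hf, ← mul_assoc, hst, one_mul]
  have hlhs : t ^ (N + 2) * (f ^ N * lsDeriv f) = φ (F ^ N * (X * d⁄dX R F) - F ^ (N + 1)) := by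
    have hD : t * lsDeriv f = HahnSeries.single (-1) 1 * (φ (X * d⁄dX R F) - φ F) := by
      rw [hf', single_one_mul_lsDeriv_single_mul, ofPowerSeries_X_mul_derivative, neg_smul,
        one_smul, sub_eq_add_neg]
    have hD2 : t * (t * lsDeriv f) = φ (X * d⁄dX R F) - φ F := by
      rw [hD, ← mul_assoc, mul_comm t, hst, one_mul]
    calc t ^ (N + 2) * (f ^ N * lsDeriv f) = (t * f) ^ N * (t * (t * lsDeriv f)) := by ring
      _ = _ := by rw [hD2, hf]; simp only [map_sub, map_mul, map_pow]; ring
  have hrhs : t ^ (N + 2) * Polynomial.aeval f p =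
      φ (∑ j ∈ Finset.range (N + 3), C (p.coeff j) * F ^ j * X ^ (N + 2 - j)) := by
    rw [Polynomial.aeval_eq_sum_range' (Nat.lt_succ_of_le hp), Finset.mul_sum, map_sum]
    refine Finset.sum_congr rfl fun j hj => ?_
    have hj : j ≤ N + 2 := Nat.lt_succ_iff.mp (Finset.mem_range.mp hj)
    have htj : t ^ (N + 2) = t ^ (N + 2 - j) * t ^ j := by rw [← pow_add, Nat.sub_add_cancel hj]
    rw [Algebra.smul_def, HahnSeries.algebraMap_apply', PowerSeries.algebraMap_apply,
      Algebra.algebraMap_self, RingHom.id_apply, map_mul, map_mul, map_pow, map_pow,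
      HahnSeries.ofPowerSeries_X, ← hf, htj]
    ring
  rw [← (ht.pow (N + 2)).mul_right_inj, hlhs, hrhs, HahnSeries.ofPowerSeries_injective.eq_iff,
    odeResidual, sub_eq_zero]

end Laurent

theorem HahnSeries.leadingCoeff_pow {Γ R : Type*} [AddCommMonoid Γ] [LinearOrder Γ]
    [IsOrderedCancelAddMonoid Γ] [Semiring R] [NoZeroDivisors R] (x : HahnSeries Γ R) (n : ℕ) :
    (x ^ n).leadingCoeff = x.leadingCoeff ^ n := by
  induction n with
  | zero => simp
  | succ n ih => rw [pow_succ, HahnSeries.leadingCoeff_mul, ih, pow_succ]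

section Order

variable {K : Type*} [Field K]

theorem coeff_aeval_natDegree_mul_order (p : Polynomial K) {f : LaurentSeries K}
    (hf : f.order < 0) :
    (Polynomial.aeval f p).coeff (p.natDegree * f.order) =
      p.leadingCoeff * f.leadingCoeff ^ p.natDegree := by
  simp only [Polynomial.aeval_eq_sum_range, Algebra.smul_def, HahnSeries.algebraMap_apply',
    PowerSeries.algebraMap_apply, Algebra.algebraMap_self, RingHom.id_apply,
    HahnSeries.ofPowerSeries_C, HahnSeries.C_mul_eq_smul]
  rw [HahnSeries.coeff_sum, Finset.sum_range_succ, Finset.sum_eq_zero fun j hj => ?_, zero_add,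
    HahnSeries.coeff_smul, smul_eq_mul, ← HahnSeries.leadingCoeff_pow, HahnSeries.leadingCoeff_eq,
    HahnSeries.order_pow, nsmul_eq_mul, Polynomial.leadingCoeff]
  rw [HahnSeries.coeff_smul, HahnSeries.coeff_eq_zero_of_lt_order, smul_zero]
  rw [HahnSeries.order_pow, nsmul_eq_mul]
  have : (j : ℤ) < p.natDegree := by exact_mod_cast Finset.mem_range.mp hj
  nlinarith

variable [CharZero K]

theorem order_lsDeriv {f : LaurentSeries K} (hf : f.order ≠ 0) :
    (lsDeriv f).order = f.order - 1 := by
  have hf0 : f ≠ 0 := by rintro rfl; exact hf HahnSeries.order_zero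
  have hcoeff : (lsDeriv f).coeff (f.order - 1) ≠ 0 := by
    rw [coeff_lsDeriv_order_sub_one]
    exact mul_ne_zero (Int.cast_ne_zero.mpr hf) (HahnSeries.leadingCoeff_ne_zero.mpr hf0)
  refine le_antisymm (HahnSeries.order_le_of_coeff_ne_zero hcoeff) <|
    (HahnSeries.le_order_iff_forall (HahnSeries.ne_zero_of_coeff_ne_zero hcoeff)).mpr fun j hj => ?_
  change (j + 1) • f.coeff (j + 1) = 0
  rw [HahnSeries.coeff_eq_zero_of_lt_order (by omega), smul_zero]

theorem leadingCoeff_lsDeriv {f : LaurentSeries K} (hf : f.order ≠ 0) :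
    (lsDeriv f).leadingCoeff = f.order * f.leadingCoeff := by
  rw [HahnSeries.leadingCoeff_eq, order_lsDeriv hf, coeff_lsDeriv_order_sub_one]

theorem order_and_coeff_neg_one_of_lsDeriv_eq_aeval
    {p : Polynomial K} {N : ℕ} (hdeg : p.natDegree = N + 2) {f : LaurentSeries K}
    (hf : f.order < 0) (heq : f ^ N * lsDeriv f = Polynomial.aeval f p) :
    f.order = -1 ∧ f.coeff (-1) = -p.leadingCoeff⁻¹ := by
  have hc : f.leadingCoeff ≠ 0 :=
    HahnSeries.leadingCoeff_ne_zero.mpr (by rintro rfl; exact hf.ne HahnSeries.order_zero)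
  have hp : p.leadingCoeff ≠ 0 :=
    Polynomial.leadingCoeff_ne_zero.mpr (Polynomial.ne_zero_of_natDegree_gt (n := 0) (by omega))
  have hlead :
      (f ^ N * lsDeriv f).leadingCoeff = f.leadingCoeff ^ N * (f.order * f.leadingCoeff) := by
    rw [HahnSeries.leadingCoeff_mul, HahnSeries.leadingCoeff_pow, leadingCoeff_lsDeriv hf.ne]
  have hord : (f ^ N * lsDeriv f).order = N * f.order + (f.order - 1) := by
    rw [HahnSeries.order_mul_of_ne_zero, HahnSeries.order_pow, nsmul_eq_mul, order_lsDeriv hf.ne]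
    rw [HahnSeries.leadingCoeff_pow, leadingCoeff_lsDeriv hf.ne]
    exact mul_ne_zero (pow_ne_zero _ hc) (mul_ne_zero (Int.cast_ne_zero.mpr hf.ne) hc)
  have hrhs := coeff_aeval_natDegree_mul_order p hf
  rw [hdeg, ← heq] at hrhs
  have hm : f.order = -1 := by
    have := HahnSeries.order_le_of_coeff_ne_zero (hrhs ▸ mul_ne_zero hp (pow_ne_zero _ hc))
    push_cast at this
    linarith
  have hcoeff : f.leadingCoeff ^ N * (f.order * f.leadingCoeff) =
      p.leadingCoeff * f.leadingCoeff ^ (N + 2) := by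
    rw [← hrhs, ← hlead, HahnSeries.leadingCoeff_eq, hord, hm]
    push_cast
    ring_nf
  rw [hm, Int.cast_neg, Int.cast_one] at hcoeff
  have hlc : p.leadingCoeff * -f.leadingCoeff = 1 := mul_left_cancel₀ (pow_ne_zero (N + 1) hc)
    (by linear_combination hcoeff)
  refine ⟨hm, ?_⟩
  rw [← hm, ← HahnSeries.leadingCoeff_eq, inv_eq_of_mul_eq_one_right hlc, neg_neg]

end Order

theorem stmt_7_general (p : Polynomial ℂ) (N_q : ℕ) (hdeg : p.natDegree = N_q + 2) :
    (∃! f : LaurentSeries ℂ,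
        f ≠ 0 ∧ f.order < 0 ∧ f ^ N_q * lsDeriv f = Polynomial.aeval f p) ∧
    (∀ f : LaurentSeries ℂ,
        (f ≠ 0 ∧ f.order < 0 ∧ f ^ N_q * lsDeriv f = Polynomial.aeval f p) →
      f.order = -1 ∧ f.coeff (-1) = -(p.leadingCoeff)⁻¹) := by
  have hsol : ∀ f : LaurentSeries ℂ,
      (f ≠ 0 ∧ f.order < 0 ∧ f ^ N_q * lsDeriv f = Polynomial.aeval f p) →
        f.order = -1 ∧ f.coeff (-1) = -(p.leadingCoeff)⁻¹ := fun f ⟨_, hf, heq⟩ =>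
    order_and_coeff_neg_one_of_lsDeriv_eq_aeval hdeg hf heq
  refine ⟨?_, hsol⟩
  obtain ⟨F, ⟨hF₀, hF⟩, hFuniq⟩ := existsUnique_odeResidual_eq_zero hdeg
  have hxf := single_one_mul_single_neg_one_mul (HahnSeries.ofPowerSeries ℤ ℂ F)
  have hf₁ : (HahnSeries.single (-1) 1 * HahnSeries.ofPowerSeries ℤ ℂ F).coeff (-1) ≠ 0 := by
    rw [coeff_single_neg_one_mul_ofPowerSeries, hF₀]
    exact neg_ne_zero.mpr (inv_ne_zero (Polynomial.leadingCoeff_ne_zero.mpr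
      (Polynomial.ne_zero_of_natDegree_gt (n := 0) (by omega))))
  refine ⟨_, ⟨HahnSeries.ne_zero_of_coeff_ne_zero hf₁,
    (HahnSeries.order_le_of_coeff_ne_zero hf₁).trans_lt (by norm_num),
    (lsDeriv_eq_aeval_iff_odeResidual_eq_zero hdeg.le hxf).mpr hF⟩, fun g hg => ?_⟩
  obtain ⟨hord, hlead⟩ := hsol g hg
  have hxg : HahnSeries.single 1 1 * g = HahnSeries.ofPowerSeries ℤ ℂ g.powerSeriesPart := by
    rw [LaurentSeries.ofPowerSeries_powerSeriesPart, hord, neg_neg]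
  have hG₀ : constantCoeff g.powerSeriesPart = -(p.leadingCoeff)⁻¹ := by
    rw [← coeff_zero_eq_constantCoeff_apply, LaurentSeries.powerSeriesPart_coeff, hord]
    exact hlead
  have hGF := hFuniq _ ⟨hG₀, (lsDeriv_eq_aeval_iff_odeResidual_eq_zero hdeg.le hxg).mp hg.2.2⟩
  exact mul_left_cancel₀ (HahnSeries.single_ne_zero one_ne_zero)
    (by rw [hxg, hGF, single_one_mul_single_neg_one_mul])

/-- Let `p ∈ ℂ[s]` be nonzero of degree `N_p` with leading coefficient
`p_{N_p} ≠ 0`, with `p, s^{N_q}` coprime (`N_q = 0` or `p(0) ≠ 0`) and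
`N_p = N_q + 2`.  There is exactly one nonzero `f ∈ ℂ((x))` of negative order with
`f^{N_q}·(df/dx) = p(f)`; moreover this `f` has order exactly `−1` and its leading
coefficient is `−1/p_{N_p}`. -/
theorem stmt_7 (p : Polynomial ℂ) (hp : p ≠ 0) (N_q : ℕ)
    (hco : N_q = 0 ∨ p.coeff 0 ≠ 0) (hdeg : p.natDegree = N_q + 2) :
    (∃! f : LaurentSeries ℂ,
        f ≠ 0 ∧ f.order < 0 ∧ f ^ N_q * lsDeriv f = Polynomial.aeval f p) ∧
    (∀ f : LaurentSeries ℂ,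
        (f ≠ 0 ∧ f.order < 0 ∧ f ^ N_q * lsDeriv f = Polynomial.aeval f p) →
      f.order = -1 ∧ f.coeff (-1) = -(p.leadingCoeff)⁻¹) :=
  stmt_7_general p N_q hdeg
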